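/- Let ν be the 1-form ν(θ,x) = x₁dx₁ + x₂dx₂ + x₃dx₃ on ℝ⁴. Then at every point p = (θ,x₁,x₂,x₃), the 4-form ν ∧ λ ∧ dλ = ν ∧ λ ∧ ω_A evaluated on the standard basis satisfies (ν(p) ∧ λ(p) ∧ ω_A(p))(e₀,e₁,e₂,e₃) = ½(x₁²+x₂²)(x₁²+x₂²+2x₃²) + 2x₃⁴; moreover this quantity is nonnegative and vanishes if and only if x₁ = x₂ = x₃ = 0. (Consequently λ restricts to a contact form on each sphere bundle {x₁²+x₂²+x₃² = r²}, r > 0, in S¹×D³.) -/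

import Mathlib

noncomputable section

/-- The standard basis vectors of ℝ⁴ (coordinates (θ,x₁,x₂,x₃)). -/
def e (i : Fin 4) : Fin 4 → ℝ := Pi.single i 1

/-- The 1-form ν = x₁dx₁ + x₂dx₂ + x₃dx₃ on ℝ⁴. -/
def nuA (p v : Fin 4 → ℝ) : ℝ := p 1 * v 1 + p 2 * v 2 + p 3 * v 3

/-- The 1-form λ = −½(x₁²+x₂²−2x₃²)dθ + x₂x₃dx₁ − x₁x₃dx₂ on ℝ⁴. -/
def lamA (p v : Fin 4 → ℝ) : ℝ :=
  -(1 / 2) * (p 1 ^ 2 + p 2 ^ 2 - 2 * p 3 ^ 2) * v 0 + p 2 * p 3 * v 1 - p 1 * p 3 * v 2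

/-- The 2-form ω_A = dλ. -/
def omegaA (p u v : Fin 4 → ℝ) : ℝ :=
  p 1 * (u 0 * v 1 - u 1 * v 0 + u 2 * v 3 - u 3 * v 2)
  + p 2 * (u 0 * v 2 - u 2 * v 0 + u 3 * v 1 - u 1 * v 3)
  + (-2 * p 3) * (u 0 * v 3 - u 3 * v 0 + u 1 * v 2 - u 2 * v 1)

/-- Wedge of a 1-form with a 2-form, by the shuffle formula. -/
def wedge12 (b : (Fin 4 → ℝ) → ℝ) (w : (Fin 4 → ℝ) → (Fin 4 → ℝ) → ℝ)
    (x y z : Fin 4 → ℝ) : ℝ :=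
  b x * w y z - b y * w x z + b z * w x y

/-- Wedge of a 1-form with a 3-form, by the shuffle formula. -/
def wedge13 (a : (Fin 4 → ℝ) → ℝ) (t : (Fin 4 → ℝ) → (Fin 4 → ℝ) → (Fin 4 → ℝ) → ℝ)
    (v0 v1 v2 v3 : Fin 4 → ℝ) : ℝ :=
  a v0 * t v1 v2 v3 - a v1 * t v0 v2 v3 + a v2 * t v0 v1 v3 - a v3 * t v0 v1 v2

lemma half_sq_mul_add_eq_zero_iff (a b c : ℝ) :
    (1 / 2) * (a ^ 2 + b ^ 2) * (a ^ 2 + b ^ 2 + 2 * c ^ 2) + 2 * c ^ 4 = 0 ↔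
      a = 0 ∧ b = 0 ∧ c = 0 := by
  have hsplit : (1 / 2) * (a ^ 2 + b ^ 2) * (a ^ 2 + b ^ 2 + 2 * c ^ 2) + 2 * c ^ 4
      = (1 / 2) * (a ^ 2 + b ^ 2) ^ 2 + (a ^ 2 + b ^ 2) * c ^ 2 + 2 * c ^ 4 := by ring
  rw [hsplit, add_eq_zero_iff_of_nonneg (by positivity) (by positivity),
    add_eq_zero_iff_of_nonneg (by positivity) (by positivity)]
  simp only [mul_eq_zero, pow_eq_zero_iff two_ne_zero, pow_eq_zero_iff four_ne_zero,
    add_eq_zero_iff_of_nonneg (sq_nonneg a) (sq_nonneg b), one_div, inv_eq_zero,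
    two_ne_zero, false_or]
  tauto

lemma nuA_wedge_lamA_wedge_omegaA_basis (p : Fin 4 → ℝ) :
    wedge13 (nuA p) (wedge12 (lamA p) (omegaA p)) (e 0) (e 1) (e 2) (e 3)
      = (1 / 2) * (p 1 ^ 2 + p 2 ^ 2) * (p 1 ^ 2 + p 2 ^ 2 + 2 * p 3 ^ 2) + 2 * p 3 ^ 4 := by
  simp only [wedge13, wedge12, nuA, lamA, omegaA, e, Pi.single_apply, Fin.reduceEq, ↓reduceIte]
  ring

/-- At every point p, (ν ∧ λ ∧ ω_A)(e₀,e₁,e₂,e₃) = ½(x₁²+x₂²)(x₁²+x₂²+2x₃²) + 2x₃⁴;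
this quantity is nonnegative and vanishes iff x₁ = x₂ = x₃ = 0. -/
theorem nu_wedge_lambda_wedge_dlambda (p : Fin 4 → ℝ) :
    wedge13 (nuA p) (wedge12 (lamA p) (omegaA p)) (e 0) (e 1) (e 2) (e 3)
      = (1 / 2) * (p 1 ^ 2 + p 2 ^ 2) * (p 1 ^ 2 + p 2 ^ 2 + 2 * p 3 ^ 2)
        + 2 * p 3 ^ 4 ∧
    0 ≤ wedge13 (nuA p) (wedge12 (lamA p) (omegaA p)) (e 0) (e 1) (e 2) (e 3) ∧
    (wedge13 (nuA p) (wedge12 (lamA p) (omegaA p)) (e 0) (e 1) (e 2) (e 3) = 0 ↔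
      p 1 = 0 ∧ p 2 = 0 ∧ p 3 = 0) := by
  rw [nuA_wedge_lamA_wedge_omegaA_basis]
  exact ⟨rfl, by positivity, half_sq_mul_add_eq_zero_iff _ _ _⟩
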